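/- Let ε ∈ (0,1), μ > 0, δ > 0, a := 1+ε, λ̄(t) := ( (δ(1−ε)/2)(1 − e^{−2t}) )^{1/(1−ε)}, and ψ(r,t) := 2 arctan( r/(e^t λ̄(t)) ) − 2 arctan( r^{a}/(e^{at} μ) ). Then for all r > 0 and t > 0, ∂ₜψ(r,t) + r ∂ᵣψ(r,t) = − 2 δ r e^{−t} λ̄(t)^{ε} / ( e^{2t} λ̄(t)² + r² ). -/

import Mathlib

open Real MeasureTheory Set Filter Topology

/-- Partial derivative in the radial variable `r`. -/
noncomputable def pr (φ : ℝ → ℝ → ℝ) (r t : ℝ) : ℝ := deriv (fun s => φ s t) r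

/-- Second partial derivative in the radial variable `r`. -/
noncomputable def prr (φ : ℝ → ℝ → ℝ) (r t : ℝ) : ℝ :=
  deriv (fun s => deriv (fun s' => φ s' t) s) r

/-- Partial derivative in the time variable `t`. -/
noncomputable def pt (φ : ℝ → ℝ → ℝ) (r t : ℝ) : ℝ := deriv (fun s => φ r s) t

/-- The axisymmetric drift harmonic map heat equation
`∂ₜφ + r ∂ᵣφ = ∂ᵣᵣφ + (1/r)∂ᵣφ − sin(2φ)/(2r²)` at the point `(r,t)`. -/
def SolvesDriftHM (φ : ℝ → ℝ → ℝ) (r t : ℝ) : Prop :=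
  pt φ r t + r * pr φ r t =
    prr φ r t + (1 / r) * pr φ r t - Real.sin (2 * φ r t) / (2 * r ^ 2)

/-- The solution `λ̄(t) = ((δ(1−ε)/2)(1 − e^{−2t}))^{1/(1−ε)}` of `λ̄' = δ e^{−2t} λ̄^ε`,
`λ̄(0) = 0`. -/
noncomputable def lamBar (δ ε : ℝ) (t : ℝ) : ℝ :=
  (δ * (1 - ε) / 2 * (1 - Real.exp (-2 * t))) ^ (1 / (1 - ε))

/-- The function `ψ(r,t) = 2 arctan(r/(e^t λ̄(t))) − 2 arctan(r^{a}/(e^{at} μ))`, `a = 1+ε`. -/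
noncomputable def psiSuper (δ ε μ : ℝ) (r t : ℝ) : ℝ :=
  2 * Real.arctan (r / (Real.exp t * lamBar δ ε t))
    - 2 * Real.arctan (r ^ (1 + ε) / (Real.exp ((1 + ε) * t) * μ))

/-! On a profile `arctan (h r / g t)` the operator `∂ₜ + r ∂ᵣ` acts as
`(r h'(r) g(t) - h(r) g'(t)) / (g(t)² + h(r)²)`. The second profile of `ψ` is a function of
`r e^{-t}` alone (`r h' = a h` and `g' = a g`), so its contribution vanishes. For the first,
`g = e^t λ̄` leaves the numerator `-r e^t λ̄'`, and the ODE `λ̄' = δ e^{-2t} λ̄^ε` gives the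
right-hand side. -/

lemma HasDerivAt.arctan_div {u v : ℝ → ℝ} {u' v' x : ℝ} (hu : HasDerivAt u u' x)
    (hv : HasDerivAt v v' x) (hv0 : v x ≠ 0) :
    HasDerivAt (fun s => Real.arctan (u s / v s)) ((u' * v x - u x * v') / (v x ^ 2 + u x ^ 2)) x := by
  refine (hu.div hv hv0).arctan.congr_deriv ?_
  simp only [Pi.div_apply]
  field_simp

section lamBar

variable {δ ε t : ℝ}

lemma lamBar_base_pos (hδ : 0 < δ) (hε : ε < 1) (ht : 0 < t) :
    0 < δ * (1 - ε) / 2 * (1 - exp (-2 * t)) := by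
  have hexp : exp (-2 * t) < 1 := exp_lt_one_iff.mpr (by linarith)
  have hε' : 0 < 1 - ε := sub_pos.mpr hε
  positivity

lemma lamBar_pos (hδ : 0 < δ) (hε : ε < 1) (ht : 0 < t) : 0 < lamBar δ ε t :=
  rpow_pos_of_pos (lamBar_base_pos hδ hε ht) _

lemma lamBar_hasDerivAt (hδ : 0 < δ) (hε : ε < 1) (ht : 0 < t) :
    HasDerivAt (lamBar δ ε) (δ * exp (-2 * t) * lamBar δ ε t ^ ε) t := by
  have hε' : 1 - ε ≠ 0 := (sub_pos.mpr hε).ne'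
  have hb := lamBar_base_pos hδ hε ht
  have hbase : HasDerivAt (fun s => δ * (1 - ε) / 2 * (1 - exp (-2 * s)))
      (δ * (1 - ε) * exp (-2 * t)) t := by
    have hlin : HasDerivAt (fun s : ℝ => -2 * s) (-2) t := by
      simpa using (hasDerivAt_id t).const_mul (-2 : ℝ)
    refine ((hlin.exp.const_sub 1).const_mul (δ * (1 - ε) / 2)).congr_deriv ?_
    ring
  have hpow : lamBar δ ε t ^ ε = (δ * (1 - ε) / 2 * (1 - exp (-2 * t))) ^ (1 / (1 - ε) - 1) := by
    rw [lamBar, ← rpow_mul hb.le]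
    congr 1
    field_simp
    ring
  rw [hpow]
  refine (hbase.rpow_const (p := 1 / (1 - ε)) (Or.inl hb.ne')).congr_deriv ?_
  field_simp

end lamBar

/-- Identity (4.11): the material derivative of `ψ` equals
`∂ₜψ + r ∂ᵣψ = −2δ r e^{−t} λ̄^ε / (e^{2t} λ̄² + r²)` for all `r > 0`, `t > 0`. -/
theorem psi_material_derivative (δ ε μ : ℝ) (hδ : 0 < δ) (hε : ε ∈ Set.Ioo (0:ℝ) 1)
    (hμ : 0 < μ) (r t : ℝ) (hr : 0 < r) (ht : 0 < t) :
    pt (psiSuper δ ε μ) r t + r * pr (psiSuper δ ε μ) r t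
      = -(2 * δ * r * Real.exp (-t) * (lamBar δ ε t) ^ ε)
          / (Real.exp (2 * t) * (lamBar δ ε t) ^ 2 + r ^ 2) := by
  have hL := lamBar_pos hδ hε.2 ht
  set L := lamBar δ ε t with hL_def
  set a := 1 + ε
  have hg₁ : HasDerivAt (fun s => exp s * lamBar δ ε s)
      (exp t * L + exp t * (δ * exp (-2 * t) * L ^ ε)) t :=
    (hasDerivAt_exp t).mul (lamBar_hasDerivAt hδ hε.2 ht)
  have hg₂ : HasDerivAt (fun s => exp (a * s) * μ) (exp (a * t) * a * μ) t := by
    simpa using (((hasDerivAt_id t).const_mul a).exp).mul_const μ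
  have hh₂ : HasDerivAt (fun s => s ^ a) (a * r ^ ε) r := by
    simpa [a] using hasDerivAt_rpow_const (p := a) (Or.inl hr.ne')
  have hpt : HasDerivAt (fun s => psiSuper δ ε μ r s) _ t :=
    ((HasDerivAt.arctan_div (hasDerivAt_const t r) hg₁ (by positivity)).const_mul 2).sub
      ((HasDerivAt.arctan_div (hasDerivAt_const t (r ^ a)) hg₂ (by positivity)).const_mul 2)
  have hpr : HasDerivAt (fun s => psiSuper δ ε μ s t) _ r :=
    ((HasDerivAt.arctan_div (hasDerivAt_id r) (hasDerivAt_const r (exp t * L))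
        (by positivity)).const_mul 2).sub
      ((HasDerivAt.arctan_div hh₂ (hasDerivAt_const r (exp (a * t) * μ))
        (by positivity)).const_mul 2)
  rw [pt, pr, hpt.deriv, hpr.deriv]
  have hra : r ^ a = r * r ^ ε := by rw [rpow_add hr, rpow_one]
  have hexp2 : exp (2 * t) = exp t ^ 2 := by rw [← exp_nat_mul]; norm_num
  have hexp_neg2 : exp (-2 * t) = (exp t ^ 2)⁻¹ := by rw [← hexp2, ← exp_neg]; ring_nf
  simp only [id, hra, hexp2, hexp_neg2, exp_neg t, ← hL_def]
  field_simp
  ring
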